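/- arXiv:0907.5305 — 2 statements merged into one kernel-verified Lean document; each statement's English description precedes it below -/
import Mathlib

section
/- Let i∈𝕋*_n(ℕ) be a labeled binary tree with n distinct leaves and type τ=τ(i)∈𝕋, and let f be a bounded continuous function on A_τ(0,t). Let g_i : A_i(0,t) → A_τ(0,t) be the 2^{q(τ)}-to-1 map that forgets leaf labels, and set f_i = f ∘ g_i. Then ∫_{A_τ(0,t)} f(ξ) μ̃_t(dξ) = ∫_{A_i(0,t)} f_i(ξ) μ̃'_t(dξ). -/
open MeasureTheory ProbabilityTheory Filter
open scoped ENNReal Classical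

noncomputable section

/-! ### Labeled binary trees (elements of `𝕋(J)`) -/

/-- Finite binary trees with leaves labeled by natural numbers. -/
inductive LTree : Type
  | leaf (k : ℕ) : LTree
  | node (l r : LTree) : LTree
  deriving DecidableEq

namespace LTree

/-- The set of leaf labels λ(i). -/
def labels : LTree → Finset ℕ
  | leaf k => {k}
  | node l r => labels l ∪ labels r

/-- The counting function n(i): the number of leaves. -/
def nLeaves : LTree → ℕ
  | leaf _ => 1
  | node l r => nLeaves l + nLeaves r

/-- A tree has distinct leaf labels iff `|λ(i)| = n(i)`. -/
def distinct (i : LTree) : Prop := i.labels.card = i.nLeaves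

/-- Whether a tree is a single leaf. -/
def isLeaf : LTree → Prop
  | leaf _ => True
  | node _ _ => False

/-- The mass `y_i` of a labeled tree, given the masses of the initial particles. -/
def massOf (y : ℕ → ℝ) : LTree → ℝ
  | leaf k => y k
  | node l r => massOf y l + massOf y r

/-- The list of leaf labels, from left to right. -/
def leafList : LTree → List ℕ
  | leaf k => [k]
  | node l r => leafList l ++ leafList r

end LTree

/-- `𝕋*J`: binary trees with distinct leaf labels belonging to `J`. -/
def TStar (J : Finset ℕ) : Set LTree := {i | i.distinct ∧ i.labels ⊆ J}

/-- `𝕋₊*J = 𝕋*J \ J`. -/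
def TplusStar (J : Finset ℕ) : Set LTree := {i | i.distinct ∧ i.labels ⊆ J ∧ ¬ i.isLeaf}

/-! ### Tree shapes (elements of `𝕋 = 𝕋({1})`) -/

/-- Binary tree shapes. -/
inductive TreeShape : Type
  | leaf : TreeShape
  | node (l r : TreeShape) : TreeShape
  deriving DecidableEq

/-- The type (shape) τ(i) of a labeled tree. -/
def LTree.shape : LTree → TreeShape
  | .leaf _ => .leaf
  | .node l r => .node l.shape r.shape

/-- The number of symmetries q(τ) of a tree shape. -/
def qsym : TreeShape → ℕ
  | .leaf => 0
  | .node l r => qsym l + qsym r + (if l = r then 1 else 0)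

/-! ### Historical trees: the space `A(0,t)` -/

/-- Historical trees: leaves carry masses, inner nodes carry coagulation times. -/
inductive HTree : Type
  | leaf (m : ℝ) : HTree
  | node (s : ℝ) (l r : HTree) : HTree

namespace HTree

/-- The mass function m(ξ). -/
def mass : HTree → ℝ
  | leaf m => m
  | node _ l r => mass l + mass r

/-- The number of leaves (initial particles) of a historical tree. -/
def nLeaves : HTree → ℕ
  | leaf _ => 1
  | node _ l r => nLeaves l + nLeaves r

/-- The shape of a historical tree. -/
def shape : HTree → TreeShape
  | leaf _ => .leaf
  | node _ l r => .node (shape l) (shape r)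

/-- The list of the leaf masses, from left to right. -/
def leafList : HTree → List ℝ
  | leaf m => [m]
  | node _ l r => leafList l ++ leafList r

/-- `ξ ∈ A(0,t)`: the root coagulation time lies in (0,t), the coagulation times
decrease along the tree, and all masses are positive. -/
def memA : HTree → ℝ → Prop
  | leaf m, _ => 0 < m
  | node s l r, t => 0 < s ∧ s < t ∧ memA l s ∧ memA r s

/-- An injective encoding, used to give `HTree` a topology. -/
def encode : HTree → List ℝ
  | leaf m => [0, m]
  | node s l r => 1 :: s :: (encode l ++ encode r)

instance : TopologicalSpace HTree := TopologicalSpace.induced encode inferInstance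
instance : MeasurableSpace HTree := borel HTree

end HTree

/-- The set `A_τ(0,t)` of historical trees of shape τ. -/
def Aset (τ : TreeShape) (t : ℝ) : Set HTree := {ξ | ξ.shape = τ ∧ ξ.memA t}

/-- The full historical space `A(0,t)`. -/
def AsetAll (t : ℝ) : Set HTree := {ξ | ξ.memA t}

/-! ### Quantities attached to a historical tree -/

/-- `K_ξ`, defined recursively by `K_ξ = 1` on leaves and
`K_ξ = K(m(ξ₁),m(ξ₂)) K_{ξ₁} K_{ξ₂}`. -/
def Kxi (K : ℝ → ℝ → ℝ) : HTree → ℝ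
  | .leaf _ => 1
  | .node _ l r => K l.mass r.mass * Kxi K l * Kxi K r

/-- The masses `(y_r : r ∈ Π_ξ⁻¹(u))` of the subtrees of ξ alive at time u. -/
def HTree.aliveMasses : HTree → ℝ → List ℝ
  | .leaf m, _ => [m]
  | .node s l r, u =>
      if s ≤ u then [HTree.mass l + HTree.mass r]
      else aliveMasses l u ++ aliveMasses r u

/-- `½ Σ_{a ≠ b ∈ L} K(a,b)` for a list of masses L. -/
def pairSum (K : ℝ → ℝ → ℝ) (L : List ℝ) : ℝ :=
  ((L.map fun a => (L.map fun b => K a b).sum).sum - (L.map fun a => K a a).sum) / 2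

/-- `Σ_{a ∈ L₁, b ∈ L₂} K(a,b)`. -/
def crossSum (K : ℝ → ℝ → ℝ) (L1 L2 : List ℝ) : ℝ :=
  (L1.map fun a => (L2.map fun b => K a b).sum).sum

/-- `K_s(ξ) = ½ Σ_{r ≠ r' ∈ Π_ξ⁻¹(s)} K(y_r, y_{r'})`. -/
def pairIntensity (K : ℝ → ℝ → ℝ) (ξ : HTree) (s : ℝ) : ℝ := pairSum K (ξ.aliveMasses s)

/-- `∫_{Δ(ξ)} ∫_E K(y_r, y') μ_{Π_ξ(r)}(dy') dr`: each subtree σ of ξ contributes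
the integral over its lifetime of `∫ K(m(σ), y') μ_u(dy')`. -/
def deltaInt (K : ℝ → ℝ → ℝ) (μfam : ℝ → Measure ℝ) : HTree → ℝ → ℝ
  | .leaf m, t => ∫ r in (0:ℝ)..t, ∫ z, K m z ∂(μfam r)
  | .node s l r, t =>
      deltaInt K μfam l s + deltaInt K μfam r s +
        ∫ u in s..t, ∫ z, K (HTree.mass l + HTree.mass r) z ∂(μfam u)

/-! ### The Lebesgue measure `ν_i^y` on `A_i^y(0,t)` -/

/-- Binary trees with masses at the leaves (a labeled tree together with its
vector of masses). -/
inductive MTree : Type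
  | leaf (m : ℝ) : MTree
  | node (l r : MTree) : MTree

/-- The mass tree of a labeled tree, given the masses of the initial particles. -/
def LTree.toMTree (y : ℕ → ℝ) : LTree → MTree
  | .leaf k => .leaf (y k)
  | .node l r => .node (l.toMTree y) (r.toMTree y)

/-- `ν_i^y`: Lebesgue measure on the coagulation times (compatible with the tree
order and below the horizon) of historical trees over the tree `i` with fixed
leaf masses `y`. -/
def nuMeasure : MTree → ℝ → Measure HTree
  | .leaf m, _ => Measure.dirac (HTree.leaf m)
  | .node l r, t =>
      (volume.restrict (Set.Ioo (0:ℝ) t)).bind fun s =>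
        ((nuMeasure l s).prod (nuMeasure r s)).map fun p => HTree.node s p.1 p.2

/-! ### The coupled Marcus–Lushnikov construction -/

/-- The coupled clocks: `S_i = 0` for initial particles and
`S_{{i,j}} = max(S_i,S_j) + (N / K(y_i,y_j)) U_{{i,j}}`. -/
def Sclock (N : ℝ) (K : ℝ → ℝ → ℝ) (y : ℕ → ℝ) (U : LTree → ℝ) : LTree → ℝ
  | .leaf _ => 0
  | .node l r =>
      max (Sclock N K y U l) (Sclock N K y U r) +
        (N / K (l.massOf y) (r.massOf y)) * U (.node l r)

/-- Merge the (a.s. unique) pair of present tree particles with minimal clock. -/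
def stepMerge (S : LTree → ℝ) (I : Finset LTree) : Finset LTree :=
  if h : ∃ p : LTree × LTree, p.1 ∈ I ∧ p.2 ∈ I ∧ p.1 ≠ p.2 ∧
      ∀ i ∈ I, ∀ j ∈ I, i ≠ j → S (.node p.1 p.2) ≤ S (.node i j) then
    insert (.node (Classical.choose h).1 (Classical.choose h).2)
      ((I.erase (Classical.choose h).1).erase (Classical.choose h).2)
  else I

/-- The jump chain of the coupled process started from the particles of `J`. -/
def evolve (S : LTree → ℝ) (J : Finset ℕ) : ℕ → Finset LTree
  | 0 => J.image LTree.leaf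
  | n + 1 => stepMerge S (evolve S J n)

/-- The time of the next merge from the state `I`. -/
def mergeClock (S : LTree → ℝ) (I : Finset LTree) : ℝ :=
  sInf {u : ℝ | ∃ i ∈ I, ∃ j ∈ I, i ≠ j ∧ u = S (.node i j)}

/-- The number of merges having occurred up to time t. -/
def numMerges (S : LTree → ℝ) (J : Finset ℕ) (t : ℝ) : ℕ :=
  ((Finset.range J.card).filter fun n => mergeClock S (evolve S J n) ≤ t).card

/-- The set of tree particles present at time t in the coupled process started
from the particles of `J`. -/
def presentTrees (S : LTree → ℝ) (J : Finset ℕ) (t : ℝ) : Finset LTree :=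
  evolve S J (numMerges S J t)

/-- The death time `T_i^J` of the tree particle `i` (`⊤` if it never dies,
`S_i` if it is never formed). -/
def deathTime (S : LTree → ℝ) (J : Finset ℕ) (i : LTree) : EReal :=
  sInf {u : EReal | ∃ s : ℝ, u = (s : EReal) ∧ S i ≤ s ∧ i ∉ presentTrees S J s}

/-- `X_t^J`: the integer-valued measure recording the masses of the particles
present at time t in the coupled process started from `J`. -/
def mlState (y : ℕ → ℝ) (S : LTree → ℝ) (J : Finset ℕ) (t : ℝ) : Measure ℝ :=
  ∑ i ∈ presentTrees S J t, Measure.dirac (i.massOf y)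

/-- `μ_t^{N,J} = N⁻¹ X_t^J`. -/
def mlMeasure (y : ℕ → ℝ) (N : ℕ) (S : LTree → ℝ) (J : Finset ℕ) (t : ℝ) : Measure ℝ :=
  ((N : ℝ≥0∞))⁻¹ • mlState y S J t

/-- The historical tree `ξ_t^i` of a tree particle `i`: its inner nodes carry
the coagulation times (which are the clocks `S`) and its leaves the masses. -/
def histTree (S : LTree → ℝ) (y : ℕ → ℝ) : LTree → HTree
  | .leaf k => .leaf (y k)
  | .node l r => .node (S (.node l r)) (histTree S y l) (histTree S y r)

/-- The empirical historical measure `μ̃_t^N = N⁻¹ Σ_{i ∈ I(t)} δ_{ξ_t^i}`. -/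
def histEmp (y : ℕ → ℝ) (N : ℕ) (S : LTree → ℝ) (t : ℝ) : Measure HTree :=
  ((N : ℝ≥0∞))⁻¹ • ∑ i ∈ presentTrees S (Finset.range N) t, Measure.dirac (histTree S y i)

/-! ### The probability space -/

/-- The sample space `Ω = (0,∞)^{𝕋₊*[N]}` (we use clocks indexed by all trees). -/
abbrev Omega : Type := LTree → ℝ

/-- The standard exponential distribution on `(0,∞)`. -/
def expOne : Measure ℝ :=
  (volume.restrict (Set.Ioi (0 : ℝ))).withDensity fun x => ENNReal.ofReal (Real.exp (-x))

/-- `F_J = σ(U_i : i ∈ 𝕋₊*J)`. -/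
def Fsigma (J : Finset ℕ) : MeasurableSpace Omega :=
  ⨆ i ∈ TplusStar J, MeasurableSpace.comap (fun ω : Omega => ω i) inferInstance

/-! ### Limit objects -/

/-- `exp(-∫_s^t ∫_E K(x,y') μ_r(dy') dr)`. -/
def survFactor (K : ℝ → ℝ → ℝ) (μfam : ℝ → Measure ℝ) (x s t : ℝ) : ℝ :=
  Real.exp (-(∫ r in s..t, ∫ z, K x z ∂(μfam r)))

/-- The limit measure `μ̃_t` on historical trees of a given shape, defined by the
recursion of the paper. -/
def limitHist (K : ℝ → ℝ → ℝ) (μfam : ℝ → Measure ℝ) (μ0 : Measure ℝ) :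
    TreeShape → ℝ → Measure HTree
  | .leaf, t =>
      (μ0.withDensity fun x => ENNReal.ofReal (survFactor K μfam x 0 t)).map HTree.leaf
  | .node τ1 τ2, t =>
      (volume.restrict (Set.Ioo (0:ℝ) t)).bind fun s =>
        ((((limitHist K μfam μ0 τ1 s).prod (limitHist K μfam μ0 τ2 s)).withDensity fun p =>
            ENNReal.ofReal ((if τ1 = τ2 then (1:ℝ)/2 else 1) * K p.1.mass p.2.mass *
              survFactor K μfam (p.1.mass + p.2.mass) s t)).map fun p =>
          HTree.node s p.1 p.2)

/-- The limit measure `μ̃_t` on the whole historical space `A(0,t)`. -/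
def limitHistTotal (K : ℝ → ℝ → ℝ) (μfam : ℝ → Measure ℝ) (μ0 : Measure ℝ) (t : ℝ) :
    Measure HTree :=
  Measure.sum fun τ : TreeShape => limitHist K μfam μ0 τ t

/-- A strong solution of the measure-valued Smoluchowski coagulation equation on `[0,T)`. -/
def IsSmoluchowskiSolution (K : ℝ → ℝ → ℝ) (φ : ℝ → ℝ) (T : ℝ) (μfam : ℝ → Measure ℝ) :
    Prop :=
  (∀ B : Set ℝ, MeasurableSet B → Measurable fun t => (μfam t B).toReal) ∧
  (∀ t, 0 ≤ t → t < T →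
    (∫⁻ s in Set.Ioc (0:ℝ) t, ∫⁻ x, ENNReal.ofReal ((φ x)^2) ∂(μfam s)) ≠ ⊤) ∧
  (∀ f : ℝ → ℝ, Measurable f → (∃ C, ∀ x, |f x| ≤ C) → ∀ t, 0 ≤ t → t < T →
    ∫ x, f x ∂(μfam t) = ∫ x, f x ∂(μfam 0) +
      ∫ s in (0:ℝ)..t,
        (1/2) * ∫ x, ∫ z, (f (x + z) - f x - f z) * K x z ∂(μfam s) ∂(μfam s))

/-! ### Hypothesis bundles -/

/-- The basic setting: a symmetric continuous positive kernel, positive masses,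
and i.i.d. standard exponential clocks. -/
structure BaseSetting where
  K : ℝ → ℝ → ℝ
  y : ℕ → ℝ
  P : Measure Omega
  prob : IsProbabilityMeasure P
  Kpos : ∀ x, 0 < x → ∀ z, 0 < z → 0 < K x z
  Ksymm : ∀ x z, K x z = K z x
  Kcont : ContinuousOn (fun p : ℝ × ℝ => K p.1 p.2) (Set.Ioi 0 ×ˢ Set.Ioi 0)
  ypos : ∀ k, 0 < y k
  indep : iIndepFun
    (fun (i : LTree) (ω : Omega) => ω i) P
  law : ∀ i : LTree, P.map (fun ω => ω i) = expOne

/-- The full setting of the paper: additionally, `K = K̃ φ φ` with `K̃` bounded and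
`φ ≥ 1` continuous sublinear, `K` bounded on squares, `μ₀` has finite `φ²`-moment,
the empirical initial conditions converge weakly (with weight `φ`) to `μ₀`, and
`(μ_t)_{t<T}` is a strong solution of the Smoluchowski equation started at `μ₀`. -/
structure Setting extends BaseSetting where
  Ktil : ℝ → ℝ → ℝ
  phi : ℝ → ℝ
  μ0 : Measure ℝ
  T : ℝ
  μfam : ℝ → Measure ℝ
  Kbdd : ∀ M : ℝ, 0 < M → ∃ C, ∀ x ∈ Set.Icc (0:ℝ) M, ∀ z ∈ Set.Icc (0:ℝ) M, K x z ≤ C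
  Kfact : ∀ x, 0 < x → ∀ z, 0 < z → K x z = Ktil x z * phi x * phi z
  Ktilbdd : ∃ C, ∀ x z, |Ktil x z| ≤ C
  phicont : ContinuousOn phi (Set.Ioi 0)
  phione : ∀ x, 0 < x → 1 ≤ phi x
  phisub : ∀ x, 0 < x → ∀ z, 0 < z → phi (x + z) ≤ phi x + phi z
  μ0supp : μ0 (Set.Iic 0) = 0
  μ0phi2 : (∫⁻ x, ENNReal.ofReal ((phi x)^2) ∂μ0) ≠ ⊤
  weak : ∀ f : ℝ → ℝ, Continuous f → (∃ C, ∀ x, |f x| ≤ C) →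
    Tendsto (fun N : ℕ => (N:ℝ)⁻¹ * ∑ k ∈ Finset.range N, f (y k))
      atTop (nhds (∫ x, f x ∂μ0))
  weakphi : ∀ f : ℝ → ℝ, Continuous f → (∃ C, ∀ x, |f x| ≤ C) →
    Tendsto (fun N : ℕ => (N:ℝ)⁻¹ * ∑ k ∈ Finset.range N, f (y k) * phi (y k))
      atTop (nhds (∫ x, f x * phi x ∂μ0))
  Tpos : 0 < T
  μfam0 : μfam 0 = μ0
  smol : IsSmoluchowskiSolution K phi T μfam


/-! ### Labeled historical trees -/

/-- Labeled historical trees: leaves carry a label and a mass, inner nodes carry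
coagulation times. -/
inductive LHTree : Type
  | leaf (k : ℕ) (m : ℝ) : LHTree
  | node (s : ℝ) (l r : LHTree) : LHTree

namespace LHTree

/-- The map `g_i` forgetting the leaf labels. -/
def forget : LHTree → HTree
  | leaf _ m => .leaf m
  | node s l r => .node s (forget l) (forget r)

/-- The underlying labeled tree. -/
def lab : LHTree → LTree
  | leaf k _ => .leaf k
  | node _ l r => .node (lab l) (lab r)

instance : MeasurableSpace LHTree := MeasurableSpace.comap forget inferInstance

end LHTree

/-- The labeled limit measure `μ̃'_t` on the labeled historical space `A_i(0,t)`,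
defined by the same recursion as `μ̃_t`. -/
def limitHistL (K : ℝ → ℝ → ℝ) (μfam : ℝ → Measure ℝ) (μ0 : Measure ℝ) :
    LTree → ℝ → Measure LHTree
  | .leaf k, t =>
      (μ0.withDensity fun x => ENNReal.ofReal (survFactor K μfam x 0 t)).map (LHTree.leaf k)
  | .node l r, t =>
      (volume.restrict (Set.Ioo (0:ℝ) t)).bind fun s =>
        ((((limitHistL K μfam μ0 l s).prod (limitHistL K μfam μ0 r s)).withDensity fun p =>
            ENNReal.ofReal ((if l.shape = r.shape then (1:ℝ)/2 else 1) *
              K p.1.forget.mass p.2.forget.mass *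
              survFactor K μfam (p.1.forget.mass + p.2.forget.mass) s t)).map fun p =>
          LHTree.node s p.1 p.2)

/-- The measure `ν_i^y(dξ) μ₀(dy₁) ⋯ μ₀(dy_n)` on labeled historical trees over `i`:
Lebesgue measure on the coagulation times, the leaf masses being distributed
independently according to `μ₀`. -/
def nuFreeL (μ0 : Measure ℝ) : LTree → ℝ → Measure LHTree
  | .leaf k, _ => μ0.map (LHTree.leaf k)
  | .node l r, t =>
      (volume.restrict (Set.Ioo (0:ℝ) t)).bind fun s =>
        ((nuFreeL μ0 l s).prod (nuFreeL μ0 r s)).map fun p => LHTree.node s p.1 p.2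

/-! ### Auxiliary: topology of lists -/

namespace S16

open Filter Topology TopologicalSpace

section Lists
variable {α : Type*} [TopologicalSpace α]

theorem tendsto_getD (d : α) (n : ℕ) :
    ∀ l : List α, Tendsto (fun l' : List α => l'.getD n d) (nhds l) (nhds (l.getD n d)) := by
  induction n with
  | zero =>
    intro l
    cases l with
    | nil => rw [nhds_nil]; exact tendsto_pure_nhds _ _
    | cons a l =>
      rw [List.tendsto_cons_iff]
      simpa using tendsto_fst
  | succ n ih =>
    intro l
    cases l with
    | nil => rw [nhds_nil]; exact tendsto_pure_nhds _ _
    | cons a l =>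
      rw [List.tendsto_cons_iff]
      simpa [Function.comp_def] using (ih l).comp tendsto_snd

theorem continuous_getD (d : α) (n : ℕ) : Continuous (fun l : List α => l.getD n d) :=
  continuous_iff_continuousAt.2 fun l => tendsto_getD d n l

theorem tendsto_append :
    ∀ l₁ l₂ : List α, Tendsto (fun p : List α × List α => p.1 ++ p.2)
      (nhds l₁ ×ˢ nhds l₂) (nhds (l₁ ++ l₂)) := by
  intro l₁
  induction l₁ with
  | nil =>
    intro l₂
    rw [nhds_nil, Filter.pure_prod]
    exact Filter.tendsto_map'_iff.2 tendsto_id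
  | cons a l₁ ih =>
    intro l₂
    have hc : nhds (a :: l₁) = (nhds a ×ˢ nhds l₁).map fun p : α × List α => p.1 :: p.2 := by
      simp only [nhds_cons, Filter.prod_eq, (Filter.map_def _ _).symm,
        (Filter.seq_eq_filter_seq _ _).symm]
      simp [-Filter.map_def, Function.comp_def, functor_norm]
    have h1 : nhds (a :: l₁) ×ˢ nhds l₂
        = ((nhds a ×ˢ nhds l₁) ×ˢ nhds l₂).map
            (fun q : (α × List α) × List α => (q.1.1 :: q.1.2, q.2)) := by
      rw [hc, ← Filter.map_id (f := nhds l₂), Filter.prod_map_map_eq]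
      simp [Filter.map_id]
    rw [h1, Filter.tendsto_map'_iff]
    show Tendsto (fun q : (α × List α) × List α => (q.1.1 :: q.1.2) ++ q.2) _ _
    simp only [List.cons_append]
    exact Filter.Tendsto.cons (tendsto_fst.comp tendsto_fst)
      ((ih l₂).comp (((tendsto_snd.comp tendsto_fst)).prodMk tendsto_snd))

theorem continuous_append : Continuous (fun p : List α × List α => p.1 ++ p.2) :=
  continuous_iff_continuousAt.2 fun ⟨l₁, l₂⟩ => by
    simpa [ContinuousAt, nhds_prod_eq] using tendsto_append l₁ l₂

theorem mem_set_sequence_iff :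
    ∀ (v : List (Set α)) (l : List α), l ∈ (sequence v : Set (List α)) ↔ List.Forall₂ (· ∈ ·) l v := by
  intro v
  induction v with
  | nil =>
    intro l
    simp [sequence, List.traverse_nil, Set.pure_def, List.forall₂_nil_right_iff]
  | cons u v ih =>
    intro l
    simp only [sequence, List.traverse_cons, Set.fmap_eq_image, Set.seq_eq_set_seq] at *
    constructor
    · rintro hl
      rcases Set.mem_seq_iff.1 hl with ⟨f, hf, x, hx, rfl⟩
      rcases (Set.mem_image _ _ _).1 hf with ⟨a, ha, rfl⟩
      exact List.Forall₂.cons ha ((ih x).1 hx)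
    · rintro (_ | ⟨ha, hx⟩)
      exact Set.mem_seq_iff.2 ⟨_, Set.mem_image_of_mem _ ha, _, (ih _).2 ‹_›, rfl⟩

theorem forall₂_nhds_of_open :
    ∀ {l : List α} {v : List (Set α)}, (∀ u ∈ v, IsOpen u) → List.Forall₂ (· ∈ ·) l v →
      List.Forall₂ (fun a s => s ∈ nhds a) l v := by
  intro l v hop h
  induction h with
  | nil => exact List.Forall₂.nil
  | @cons a u l' v' ha _ ih =>
    exact List.Forall₂.cons ((hop u List.mem_cons_self).mem_nhds ha)
      (ih fun w hw => hop w (List.mem_cons_of_mem _ hw))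

theorem forall₂_snd_mem {P : α → Set α → Prop} {Q : Set α → Prop}
    (hPQ : ∀ a u, P a u → Q u) :
    ∀ {l : List α} {v : List (Set α)}, List.Forall₂ P l v → ∀ u ∈ v, Q u := by
  intro l v h
  induction h with
  | nil => intro u hu; cases hu
  | cons ha _ ih =>
    intro u hu
    rcases List.mem_cons.1 hu with rfl | hu
    · exact hPQ _ _ ha
    · exact ih u hu

theorem forall₂_mem_of_subset {l : List α} {v us : List (Set α)}
    (h1 : List.Forall₂ (· ∈ ·) l v) (h2 : List.Forall₂ (· ⊆ ·) v us) :
    List.Forall₂ (· ∈ ·) l us := by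
  induction h1 generalizing us with
  | nil => cases h2; exact List.Forall₂.nil
  | cons ha _ ih =>
    cases h2 with
    | cons hsub htail => exact List.Forall₂.cons (hsub ha) (ih htail)

instance secondCountableList [SecondCountableTopology α] :
    SecondCountableTopology (List α) := by
  rcases TopologicalSpace.exists_countable_basis α with ⟨b, hbc, -, hb⟩
  refine TopologicalSpace.IsTopologicalBasis.secondCountableTopology
    (b := (fun v : List (Set α) => {l : List α | List.Forall₂ (· ∈ ·) l v}) ''
      {v | ∀ u ∈ v, u ∈ b}) ?_ ?_
  · refine TopologicalSpace.isTopologicalBasis_of_isOpen_of_nhds ?_ ?_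
    · rintro U ⟨v, hv, rfl⟩
      rw [isOpen_iff_mem_nhds]
      intro l hl
      rw [nhds_list]
      have : sequence v ∈ traverse nhds l :=
        Filter.mem_traverse _ _
          (forall₂_nhds_of_open (fun u hu => hb.isOpen (hv u hu)) hl)
      refine Filter.mem_of_superset this ?_
      intro x hx
      exact (mem_set_sequence_iff v x).1 hx
    · intro l U hlU hU
      have hUn : U ∈ nhds l := hU.mem_nhds hlU
      rw [nhds_list] at hUn
      rcases (Filter.mem_traverse_iff _ _).1 hUn with ⟨us, hus, hseq⟩
      have : ∃ v : List (Set α), List.Forall₂ (fun a u => a ∈ u ∧ u ∈ b) l v ∧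
          List.Forall₂ (· ⊆ ·) v us := by
        clear hseq hUn hlU hU
        induction hus with
        | nil => exact ⟨[], List.Forall₂.nil, List.Forall₂.nil⟩
        | @cons a s l' us' hs _ ih =>
          rcases ih with ⟨v, hv1, hv2⟩
          rcases mem_nhds_iff.1 hs with ⟨w, hws, hw, haw⟩
          rcases hb.exists_subset_of_mem_open haw hw with ⟨u, hub, hau, huw⟩
          exact ⟨u :: v, List.Forall₂.cons ⟨hau, hub⟩ hv1,
            List.Forall₂.cons (huw.trans hws) hv2⟩
      rcases this with ⟨v, hv1, hv2⟩
      refine ⟨_, ⟨v, ?_, rfl⟩, ?_, ?_⟩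
      · exact forall₂_snd_mem (fun _ _ h => h.2) hv1
      · exact hv1.imp fun _ _ h => h.1
      · intro x hx
        exact hseq ((mem_set_sequence_iff us x).2 (forall₂_mem_of_subset hx hv2))
  · refine Set.Countable.image ?_ _
    have he : {v : List (Set α) | ∀ u ∈ v, u ∈ b}
        = Set.range (List.map (Subtype.val : b → Set α)) := by
      ext v
      constructor
      · intro hv
        refine ⟨v.attach.map fun x => ⟨x.1, hv _ x.2⟩, ?_⟩
        simp [List.map_map, Function.comp_def]
      · rintro ⟨w, rfl⟩
        intro u hu
        rcases List.mem_map.1 hu with ⟨x, -, rfl⟩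
        exact x.2
    rw [he]
    have : Countable b := hbc.to_subtype
    exact Set.countable_range _

end Lists

end S16

/-! ### Auxiliary: measurable structure of `HTree` -/

namespace S16

open MeasureTheory

instance : BorelSpace HTree := ⟨rfl⟩

theorem continuous_encode : Continuous HTree.encode := continuous_induced_dom

instance : SecondCountableTopology HTree :=
  TopologicalSpace.secondCountableTopology_induced HTree (List ℝ) HTree.encode

theorem continuous_htleaf : Continuous HTree.leaf := by
  apply continuous_induced_rng.2
  show Continuous fun m : ℝ => HTree.encode (HTree.leaf m)
  simp only [HTree.encode]
  exact List.continuous_cons.comp (continuous_const.prodMk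
    (List.continuous_cons.comp (continuous_id.prodMk continuous_const)))

theorem measurable_htleaf : Measurable HTree.leaf := continuous_htleaf.measurable

theorem continuous_htnode :
    Continuous fun x : ℝ × HTree × HTree => HTree.node x.1 x.2.1 x.2.2 := by
  apply continuous_induced_rng.2
  show Continuous fun x : ℝ × HTree × HTree => HTree.encode (HTree.node x.1 x.2.1 x.2.2)
  simp only [HTree.encode]
  refine List.continuous_cons.comp (continuous_const.prodMk ?_)
  refine List.continuous_cons.comp (continuous_fst.prodMk ?_)
  exact continuous_append.comp
    (((continuous_encode.comp continuous_fst).comp continuous_snd).prodMk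
      ((continuous_encode.comp continuous_snd).comp continuous_snd))

theorem measurable_htnode (s : ℝ) :
    Measurable fun q : HTree × HTree => HTree.node s q.1 q.2 := by
  have : Continuous fun q : HTree × HTree => HTree.node s q.1 q.2 :=
    continuous_htnode.comp (continuous_const.prodMk continuous_id)
  exact this.measurable

theorem getD_cons_cons {α : Type*} (x y : α) (l : List α) (n : ℕ) (d : α) :
    (x :: y :: l).getD (2 + n) d = l.getD n d := by
  have h : 2 + n = n + 1 + 1 := by omega
  rw [h, List.getD_cons_succ, List.getD_cons_succ]

/-- The `n`-th coordinate of the encoding. -/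
def hcoord (n : ℕ) (ξ : HTree) : ℝ := ξ.encode.getD n 0

theorem measurable_hcoord (n : ℕ) : Measurable (hcoord n) :=
  ((continuous_getD (0 : ℝ) n).comp continuous_encode).measurable

/-- The length of the encoding of a tree of a given shape. -/
def elen : TreeShape → ℕ
  | .leaf => 2
  | .node a b => 2 + elen a + elen b

theorem encode_length : ∀ ξ : HTree, ξ.encode.length = elen ξ.shape
  | .leaf m => rfl
  | .node s l r => by
    simp only [HTree.encode, HTree.shape, elen, List.length_cons, List.length_append,
      encode_length l, encode_length r]
    omega

/-- Marker positions and values characterizing a shape. -/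
def marks0 : TreeShape → List (ℕ × ℝ)
  | .leaf => [(0, 0)]
  | .node a b => (0, 1) :: ((marks0 a).map (fun p => (p.1 + 2, p.2)) ++
      (marks0 b).map (fun p => (p.1 + (2 + elen a), p.2)))

theorem shape_of_marks :
    ∀ (τ : TreeShape) (ξ : HTree) (w : List ℝ),
      (∀ p ∈ marks0 τ, (ξ.encode ++ w).getD p.1 0 = p.2) → ξ.shape = τ := by
  intro τ
  induction τ with
  | leaf =>
    intro ξ w h
    have h0 := h (0, 0) (by simp [marks0])
    cases ξ with
    | leaf m => rfl
    | node s l r => simp [HTree.encode] at h0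
  | node a b iha ihb =>
    intro ξ w h
    have h0 := h (0, 1) (by simp [marks0])
    cases ξ with
    | leaf m => simp [HTree.encode] at h0
    | node s l r =>
      have hstream : (HTree.node s l r).encode ++ w
          = 1 :: s :: (l.encode ++ (r.encode ++ w)) := by
        simp [HTree.encode, List.append_assoc]
      have hla : l.shape = a := by
        refine iha l (r.encode ++ w) ?_
        intro p hp
        have := h (p.1 + 2, p.2) (by
          simp only [marks0, List.mem_cons, List.mem_append, List.mem_map]
          exact Or.inr (Or.inl ⟨p, hp, rfl⟩))
        rw [hstream, show p.1 + 2 = 2 + p.1 from by omega, getD_cons_cons] at this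
        exact this
      have hlen : l.encode.length = elen a := by rw [encode_length, hla]
      have hrb : r.shape = b := by
        refine ihb r w ?_
        intro p hp
        have := h (p.1 + (2 + elen a), p.2) (by
          simp only [marks0, List.mem_cons, List.mem_append, List.mem_map]
          exact Or.inr (Or.inr ⟨p, hp, rfl⟩))
        rw [hstream, show p.1 + (2 + elen a) = 2 + (elen a + p.1) from by omega,
          getD_cons_cons, List.getD_append_right _ _ _ _ (by omega), hlen,
          show elen a + p.1 - elen a = p.1 from by omega] at this
        exact this
      simp [HTree.shape, hla, hrb]

theorem marks_of_shape :
    ∀ (ξ : HTree) (w : List ℝ) (p : ℕ × ℝ), p ∈ marks0 ξ.shape →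
      (ξ.encode ++ w).getD p.1 0 = p.2 := by
  intro ξ
  induction ξ with
  | leaf m =>
    intro w p hp
    simp only [HTree.shape, marks0, List.mem_singleton] at hp
    subst hp
    simp [HTree.encode]
  | node s l r ihl ihr =>
    intro w p hp
    have hstream : (HTree.node s l r).encode ++ w
        = 1 :: s :: (l.encode ++ (r.encode ++ w)) := by
      simp [HTree.encode, List.append_assoc]
    rw [hstream]
    simp only [HTree.shape, marks0, List.mem_cons, List.mem_append, List.mem_map] at hp
    rcases hp with rfl | ⟨⟨q, hq, rfl⟩ | ⟨q, hq, rfl⟩⟩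
    · simp
    · rw [show q.1 + 2 = 2 + q.1 from by omega, getD_cons_cons]
      exact ihl (r.encode ++ w) q hq
    · have hlen : l.encode.length = elen l.shape := encode_length l
      rw [show q.1 + (2 + elen l.shape) = 2 + (elen l.shape + q.1) from by omega,
        getD_cons_cons, List.getD_append_right _ _ _ _ (by omega), hlen,
        show elen l.shape + q.1 - elen l.shape = q.1 from by omega]
      exact ihr w q hq

theorem shapeSet_eq (τ : TreeShape) :
    {ξ : HTree | ξ.shape = τ} = {ξ | ∀ p ∈ marks0 τ, hcoord p.1 ξ = p.2} := by
  ext ξ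
  constructor
  · rintro rfl p hp
    have := marks_of_shape ξ (List.nil) p hp
    simpa [hcoord] using this
  · intro h
    refine shape_of_marks τ ξ (List.nil) ?_
    intro p hp
    simpa [hcoord] using h p hp

theorem measurableSet_shapeSet (τ : TreeShape) :
    MeasurableSet {ξ : HTree | ξ.shape = τ} := by
  rw [shapeSet_eq]
  have : {ξ : HTree | ∀ p ∈ marks0 τ, hcoord p.1 ξ = p.2}
      = ⋂ p ∈ {p | p ∈ marks0 τ}, {ξ | hcoord p.1 ξ = p.2} := by
    ext ξ; simp
  rw [this]
  refine MeasurableSet.biInter ((marks0 τ).finite_toSet.countable) ?_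
  intro p _
  exact (measurable_hcoord p.1) (measurableSet_singleton p.2)

/-- The memA-conditions for a subtree of shape τ sitting at offset o, with
varying horizon (second component). -/
def conds : TreeShape → ℕ → Set (HTree × ℝ)
  | .leaf, o => {x | 0 < hcoord (o + 1) x.1}
  | .node a b, o =>
      {x | 0 < hcoord (o + 1) x.1 ∧ hcoord (o + 1) x.1 < x.2}
      ∩ ((fun x : HTree × ℝ => (x.1, hcoord (o + 1) x.1)) ⁻¹' conds a (o + 2))
      ∩ ((fun x : HTree × ℝ => (x.1, hcoord (o + 1) x.1)) ⁻¹' conds b (o + 2 + elen a))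

theorem measurableSet_conds : ∀ (τ : TreeShape) (o : ℕ), MeasurableSet (conds τ o) := by
  intro τ
  induction τ with
  | leaf =>
    intro o
    exact measurableSet_lt measurable_const ((measurable_hcoord (o + 1)).comp measurable_fst)
  | node a b iha ihb =>
    intro o
    refine MeasurableSet.inter (MeasurableSet.inter ?_ ?_) ?_
    · exact MeasurableSet.inter
        (measurableSet_lt measurable_const ((measurable_hcoord (o + 1)).comp measurable_fst))
        (measurableSet_lt ((measurable_hcoord (o + 1)).comp measurable_fst) measurable_snd)
    · exact (measurable_fst.prodMk ((measurable_hcoord (o + 1)).comp measurable_fst)) (iha _)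
    · exact (measurable_fst.prodMk ((measurable_hcoord (o + 1)).comp measurable_fst)) (ihb _)

theorem conds_spec :
    ∀ (τ : TreeShape) (σ : HTree), σ.shape = τ → ∀ (o : ℕ) (ξ : HTree),
      (∀ n < elen τ, hcoord (o + n) ξ = σ.encode.getD n 0) →
      ∀ u : ℝ, ((ξ, u) ∈ conds τ o ↔ σ.memA u) := by
  intro τ
  induction τ with
  | leaf =>
    intro σ hσ o ξ hc u
    cases σ with
    | node s l r => simp [HTree.shape] at hσ
    | leaf m =>
      have h1 : hcoord (o + 1) ξ = m := by
        have := hc 1 (by simp [elen])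
        simpa [HTree.encode] using this
      simp [conds, HTree.memA, h1]
  | node a b iha ihb =>
    intro σ hσ o ξ hc u
    cases σ with
    | leaf m => simp [HTree.shape] at hσ
    | node s l r =>
      simp only [HTree.shape, TreeShape.node.injEq] at hσ
      obtain ⟨hla, hrb⟩ := hσ
      have hel : l.encode.length = elen a := by rw [encode_length, hla]
      have hs : hcoord (o + 1) ξ = s := by
        have := hc 1 (by simp [elen]; omega)
        simpa [HTree.encode] using this
      have hcl : ∀ n < elen a, hcoord (o + 2 + n) ξ = l.encode.getD n 0 := by
        intro n hn
        have := hc (2 + n) (by simp [elen]; omega)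
        have harr : o + (2 + n) = o + 2 + n := by omega
        rw [harr] at this
        rw [this]
        simp only [HTree.encode]
        rw [getD_cons_cons, List.getD_append _ _ _ _ (by omega)]
      have hcr : ∀ n < elen b, hcoord (o + 2 + elen a + n) ξ = r.encode.getD n 0 := by
        intro n hn
        have := hc (2 + elen a + n) (by simp [elen]; omega)
        have harr : o + (2 + elen a + n) = o + 2 + elen a + n := by omega
        rw [harr] at this
        rw [this]
        simp only [HTree.encode]
        rw [show 2 + elen a + n = 2 + (elen a + n) from by omega, getD_cons_cons,
          List.getD_append_right _ _ _ _ (by omega), hel,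
          show elen a + n - elen a = n from by omega]
      have hl := iha l hla (o + 2) ξ hcl
      have hr := ihb r hrb (o + 2 + elen a) ξ hcr
      simp only [conds, Set.mem_inter_iff, Set.mem_setOf_eq, Set.mem_preimage, hs,
        HTree.memA, hl, hr]
      tauto

theorem measurableSet_Aset (τ : TreeShape) (t : ℝ) : MeasurableSet (Aset τ t) := by
  have he : Aset τ t = {ξ : HTree | ξ.shape = τ}
      ∩ ((fun ξ : HTree => (ξ, t)) ⁻¹' conds τ 0) := by
    ext ξ
    simp only [Aset, Set.mem_setOf_eq, Set.mem_inter_iff, Set.mem_preimage]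
    constructor
    · rintro ⟨hsh, hmemA⟩
      refine ⟨hsh, ?_⟩
      rw [conds_spec τ ξ hsh 0 ξ (fun n _ => by simp [hcoord]) t]
      exact hmemA
    · rintro ⟨hsh, hcond⟩
      refine ⟨hsh, ?_⟩
      rwa [conds_spec τ ξ hsh 0 ξ (fun n _ => by simp [hcoord]) t] at hcond
  rw [he]
  exact (measurableSet_shapeSet τ).inter
    ((measurable_id.prodMk measurable_const) (measurableSet_conds τ 0))

end S16

/-! ### Auxiliary: measures on a space with a comap σ-algebra -/

namespace S16

open MeasureTheory

section Comap

variable {A B C : Type*} [mB : MeasurableSpace B] {F : A → B} {G : B → A}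

theorem bind_eq_join_map {C D : Type*} [MeasurableSpace C] [MeasurableSpace D]
    (m : Measure C) (f : C → Measure D) : m.bind f = (m.map f).join := rfl

theorem meas_F [mA : MeasurableSpace A] (hA : mA = mB.comap F) : Measurable F := by
  subst hA; exact measurable_iff_comap_le.2 le_rfl

theorem meas_G [mA : MeasurableSpace A] (hA : mA = mB.comap F)
    (hFG : ∀ b, F (G b) = b) : Measurable G := by
  subst hA
  intro t ht
  rcases MeasurableSpace.measurableSet_comap.1 ht with ⟨s, hs, rfl⟩
  have he : G ⁻¹' (F ⁻¹' s) = s := by ext b; simp [hFG]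
  rw [he]; exact hs

theorem map_F_map_G [mA : MeasurableSpace A] (hA : mA = mB.comap F)
    (hFG : ∀ b, F (G b) = b) (ρ : Measure B) : (ρ.map G).map F = ρ := by
  rw [Measure.map_map (meas_F hA) (meas_G hA hFG)]
  have h : F ∘ G = id := funext hFG
  rw [h, Measure.map_id]

theorem map_G_map_F [mA : MeasurableSpace A] (hA : mA = mB.comap F)
    (hFG : ∀ b, F (G b) = b) (ν : Measure A) : (ν.map F).map G = ν := by
  have mF : Measurable F := meas_F hA
  have mG : Measurable G := meas_G hA hFG
  refine Measure.ext fun s hs => ?_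
  rw [hA] at hs
  rcases MeasurableSpace.measurableSet_comap.1 hs with ⟨t, ht, rfl⟩
  have hFt : MeasurableSet (F ⁻¹' t) := mF ht
  rw [Measure.map_apply mG hFt, Measure.map_apply mF]
  · congr 1
    ext b
    simp [hFG]
  · exact mG hFt

theorem lintegral_comp_F [mA : MeasurableSpace A] (hA : mA = mB.comap F)
    (hFG : ∀ b, F (G b) = b) (ν : Measure A) (h : B → ℝ≥0∞) :
    ∫⁻ a, h (F a) ∂ν = ∫⁻ b, h b ∂(ν.map F) := by
  have mF : Measurable F := meas_F hA
  have mG : Measurable G := meas_G hA hFG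
  refine le_antisymm ?_ (lintegral_map_le h F)
  conv_lhs => rw [← map_G_map_F hA hFG ν]
  refine le_trans (lintegral_map_le (fun a => h (F a)) G) ?_
  refine le_of_eq ?_
  refine lintegral_congr fun b => ?_
  simp [hFG]

theorem bind_map_G [mA : MeasurableSpace A] [mC : MeasurableSpace C]
    (hA : mA = mB.comap F) (hFG : ∀ b, F (G b) = b)
    (m : Measure C) (κ : C → Measure B) :
    (m.bind fun c => (κ c).map G).map F = m.bind κ := by
  have mF : Measurable F := meas_F hA
  have mG : Measurable G := meas_G hA hFG
  by_cases hAE : AEMeasurable κ m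
  · have h2 : AEMeasurable (fun c => (κ c).map G) m :=
      (Measure.measurable_map G mG).comp_aemeasurable hAE
    rw [bind_eq_join_map, bind_eq_join_map]
    have h3 : m.map (fun c => (κ c).map G) = (m.map κ).map (fun ρ => ρ.map G) := by
      rw [AEMeasurable.map_map_of_aemeasurable
        ((Measure.measurable_map G mG).aemeasurable) hAE]
      rfl
    rw [h3, Measure.join_map_map mG, Measure.map_map mF mG]
    have h : F ∘ G = id := funext hFG
    rw [h, Measure.map_id]
  · have hAE' : ¬ AEMeasurable (fun c => (κ c).map G) m := by
      intro hcon
      apply hAE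
      have h4 : AEMeasurable (fun c => ((κ c).map G).map F) m :=
        (Measure.measurable_map F mF).comp_aemeasurable hcon
      have he : (fun c => ((κ c).map G).map F) = κ := by
        funext c
        exact map_F_map_G hA hFG (κ c)
      rwa [he] at h4
    rw [bind_eq_join_map, bind_eq_join_map, Measure.map_of_not_aemeasurable hAE',
      Measure.map_of_not_aemeasurable hAE, Measure.join_zero, Measure.join_zero,
      Measure.map_zero]

theorem comap_prod [mA : MeasurableSpace A] (hA : mA = mB.comap F) :
    (Prod.instMeasurableSpace : MeasurableSpace (A × A))
      = MeasurableSpace.comap (fun p : A × A => (F p.1, F p.2))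
          (Prod.instMeasurableSpace : MeasurableSpace (B × B)) := by
  subst hA
  show ((mB.comap F).comap Prod.fst ⊔ (mB.comap F).comap Prod.snd)
      = MeasurableSpace.comap (fun p : A × A => (F p.1, F p.2))
          (mB.comap Prod.fst ⊔ mB.comap Prod.snd)
  rw [MeasurableSpace.comap_sup, MeasurableSpace.comap_comp, MeasurableSpace.comap_comp,
    MeasurableSpace.comap_comp, MeasurableSpace.comap_comp]
  rfl

theorem prod_map_G [mA : MeasurableSpace A] (hA : mA = mB.comap F)
    (hFG : ∀ b, F (G b) = b) (μ₁ μ₂ : Measure B) :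
    (μ₁.map G).prod (μ₂.map G)
      = (μ₁.prod μ₂).map (fun q : B × B => (G q.1, G q.2)) := by
  have mF : Measurable F := meas_F hA
  have mG : Measurable G := meas_G hA hFG
  have hA2 : (Prod.instMeasurableSpace : MeasurableSpace (A × A))
      = MeasurableSpace.comap (fun p : A × A => (F p.1, F p.2)) inferInstance :=
    comap_prod hA
  have hFG2 : ∀ q : B × B,
      (fun p : A × A => (F p.1, F p.2)) ((fun q : B × B => (G q.1, G q.2)) q) = q := by
    intro q; simp [hFG]
  have mFF : Measurable (fun p : A × A => (F p.1, F p.2)) := meas_F hA2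
  have mGG : Measurable (fun q : B × B => (G q.1, G q.2)) :=
    meas_G (G := fun q : B × B => (G q.1, G q.2)) hA2 hFG2
  have hkey : (fun x : A => (μ₂.map G).map (Prod.mk x))
      = fun x => ((μ₂.map (Prod.mk (F x))).map (fun q : B × B => (G q.1, G q.2))) := by
    funext x
    refine Measure.ext fun s hs => ?_
    rw [hA2] at hs
    rcases MeasurableSpace.measurableSet_comap.1 hs with ⟨t, ht, rfl⟩
    have hTx : MeasurableSet (Prod.mk (F x) ⁻¹' t) := measurable_prodMk_left ht
    have hset1 : Prod.mk x ⁻¹' ((fun p : A × A => (F p.1, F p.2)) ⁻¹' t)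
        = F ⁻¹' (Prod.mk (F x) ⁻¹' t) := rfl
    have hmeasAA : MeasurableSet ((fun p : A × A => (F p.1, F p.2)) ⁻¹' t) := by
      rw [hA2]; exact MeasurableSpace.measurableSet_comap.2 ⟨t, ht, rfl⟩
    rw [Measure.map_apply measurable_prodMk_left hmeasAA, hset1,
      Measure.map_apply mG (mF hTx), Measure.map_apply mGG hmeasAA]
    have hset2 : (fun q : B × B => (G q.1, G q.2)) ⁻¹'
        ((fun p : A × A => (F p.1, F p.2)) ⁻¹' t) = t := by
      ext q; simp [hFG]
    rw [hset2, Measure.map_apply measurable_prodMk_left ht]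
    congr 1
    ext b
    simp [hFG]
  rw [Measure.prod_def, Measure.prod_def, hkey]
  by_cases hAE : AEMeasurable (fun w : B => μ₂.map (Prod.mk w)) μ₁
  · have h1 : AEMeasurable (fun x : A => μ₂.map (Prod.mk (F x))) (μ₁.map G) := by
      have : AEMeasurable (fun w : B => μ₂.map (Prod.mk w)) ((μ₁.map G).map F) := by
        rw [map_F_map_G hA hFG]; exact hAE
      exact this.comp_aemeasurable mF.aemeasurable
    have h2 : AEMeasurable
        (fun x : A => (μ₂.map (Prod.mk (F x))).map (fun q : B × B => (G q.1, G q.2)))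
        (μ₁.map G) :=
      (Measure.measurable_map _ mGG).comp_aemeasurable h1
    rw [bind_eq_join_map, bind_eq_join_map]
    have h3 : (μ₁.map G).map
        (fun x : A => (μ₂.map (Prod.mk (F x))).map (fun q : B × B => (G q.1, G q.2)))
        = μ₁.map (fun w : B => (μ₂.map (Prod.mk w)).map (fun q : B × B => (G q.1, G q.2))) := by
      rw [AEMeasurable.map_map_of_aemeasurable h2 mG.aemeasurable]
      congr 1
      funext w
      simp [Function.comp, hFG]
    rw [h3]
    have h4 : μ₁.map (fun w : B => (μ₂.map (Prod.mk w)).map (fun q : B × B => (G q.1, G q.2)))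
        = (μ₁.map (fun w : B => μ₂.map (Prod.mk w))).map
            (fun ρ => ρ.map (fun q : B × B => (G q.1, G q.2))) := by
      rw [AEMeasurable.map_map_of_aemeasurable
        ((Measure.measurable_map _ mGG).aemeasurable) hAE]
      rfl
    rw [h4, Measure.join_map_map mGG]
  · have hAE' : ¬ AEMeasurable
        (fun x : A => (μ₂.map (Prod.mk (F x))).map (fun q : B × B => (G q.1, G q.2)))
        (μ₁.map G) := by
      intro hcon
      apply hAE
      have h5 : AEMeasurable
          (fun w : B => (μ₂.map (Prod.mk (F (G w)))).map (fun q : B × B => (G q.1, G q.2)))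
          μ₁ := hcon.comp_aemeasurable mG.aemeasurable
      have h6 : AEMeasurable
          (fun w : B => ((μ₂.map (Prod.mk (F (G w)))).map
            (fun q : B × B => (G q.1, G q.2))).map (fun p : A × A => (F p.1, F p.2))) μ₁ :=
        (Measure.measurable_map _ mFF).comp_aemeasurable h5
      have he : (fun w : B => ((μ₂.map (Prod.mk (F (G w)))).map
            (fun q : B × B => (G q.1, G q.2))).map (fun p : A × A => (F p.1, F p.2)))
          = fun w : B => μ₂.map (Prod.mk w) := by
        funext w
        rw [map_F_map_G hA2 hFG2, hFG]
      rwa [he] at h6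
    rw [bind_eq_join_map, bind_eq_join_map, Measure.map_of_not_aemeasurable hAE',
      Measure.map_of_not_aemeasurable hAE, Measure.join_zero, Measure.join_zero,
      Measure.map_zero]

end Comap

end S16

/-! ### Auxiliary: labeled historical trees and the comparison of the limit measures -/

namespace S16

open MeasureTheory

theorem hLH : (inferInstance : MeasurableSpace LHTree)
    = MeasurableSpace.comap LHTree.forget (inferInstance : MeasurableSpace HTree) := rfl

/-- Relabel a historical tree with the label 0 everywhere. -/
def label0 : HTree → LHTree
  | .leaf m => .leaf 0 m
  | .node s l r => .node s (label0 l) (label0 r)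

theorem forget_label0 : ∀ ξ : HTree, (label0 ξ).forget = ξ
  | .leaf _ => rfl
  | .node s l r => by
    simp only [label0, LHTree.forget, forget_label0 l, forget_label0 r]

theorem measurable_forget : Measurable LHTree.forget := meas_F hLH

theorem measurable_toLH {δ : Type*} [MeasurableSpace δ] {g : δ → LHTree}
    (h : Measurable fun x => (g x).forget) : Measurable g := by
  intro t ht
  obtain ⟨s, hs, rfl⟩ := ht
  exact h hs

theorem measurable_label0 : Measurable label0 := by
  refine measurable_toLH ?_
  simp only [forget_label0]
  exact measurable_id

theorem measurable_leafL (k : ℕ) : Measurable (LHTree.leaf k) := by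
  refine measurable_toLH ?_
  exact measurable_htleaf

theorem measurable_nodeL (s : ℝ) :
    Measurable fun p : LHTree × LHTree => LHTree.node s p.1 p.2 := by
  refine measurable_toLH ?_
  show Measurable fun p : LHTree × LHTree => HTree.node s p.1.forget p.2.forget
  exact (measurable_htnode s).comp
    ((measurable_forget.comp measurable_fst).prodMk (measurable_forget.comp measurable_snd))

/-- Relabel a historical tree along a labeled tree. -/
def labAlong : LTree → HTree → LHTree
  | .leaf k, .leaf m => .leaf k m
  | .leaf _, .node s l r => .node s (label0 l) (label0 r)
  | .node _ _, .leaf m => .leaf 0 m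
  | .node a b, .node s l r => .node s (labAlong a l) (labAlong b r)

theorem forget_labAlong : ∀ (i : LTree) (ξ : HTree), (labAlong i ξ).forget = ξ := by
  intro i
  induction i with
  | leaf k =>
    intro ξ
    cases ξ with
    | leaf m => rfl
    | node s l r => simp only [labAlong, LHTree.forget, forget_label0]
  | node a b iha ihb =>
    intro ξ
    cases ξ with
    | leaf m => rfl
    | node s l r => simp only [labAlong, LHTree.forget, iha, ihb]

theorem lab_labAlong : ∀ (i : LTree) (ξ : HTree), ξ.shape = i.shape →
    (labAlong i ξ).lab = i := by
  intro i
  induction i with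
  | leaf k =>
    intro ξ hξ
    cases ξ with
    | leaf m => rfl
    | node s l r => simp [HTree.shape, LTree.shape] at hξ
  | node a b iha ihb =>
    intro ξ hξ
    cases ξ with
    | leaf m => simp [HTree.shape, LTree.shape] at hξ
    | node s l r =>
      simp only [HTree.shape, LTree.shape, TreeShape.node.injEq] at hξ
      simp only [labAlong, LHTree.lab, iha l hξ.1, ihb r hξ.2]

theorem shape_forget_lab : ∀ ζ : LHTree, ζ.forget.shape = ζ.lab.shape
  | .leaf _ _ => rfl
  | .node s l r => by
    simp only [LHTree.forget, LHTree.lab, HTree.shape, LTree.shape,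
      shape_forget_lab l, shape_forget_lab r]

/-- The labeled limit measure pushes forward to the unlabeled limit measure. -/
theorem mainlem (K : ℝ → ℝ → ℝ) (μfam : ℝ → Measure ℝ) (μ0 : Measure ℝ) :
    ∀ (i : LTree) (t : ℝ),
      (limitHistL K μfam μ0 i t).map LHTree.forget = limitHist K μfam μ0 i.shape t := by
  intro i
  induction i with
  | leaf k =>
    intro t
    simp only [limitHistL, LTree.shape, limitHist]
    rw [Measure.map_map measurable_forget (measurable_leafL k)]
    rfl
  | node a b iha ihb =>
    intro t
    have perS : ∀ s : ℝ,
        (((((limitHistL K μfam μ0 a s).prod (limitHistL K μfam μ0 b s)).withDensity fun p =>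
            ENNReal.ofReal ((if a.shape = b.shape then (1:ℝ)/2 else 1) *
              K p.1.forget.mass p.2.forget.mass *
              survFactor K μfam (p.1.forget.mass + p.2.forget.mass) s t)).map fun p =>
          LHTree.node s p.1 p.2).map LHTree.forget)
        = ((((limitHist K μfam μ0 a.shape s).prod (limitHist K μfam μ0 b.shape s)).withDensity
            fun q => ENNReal.ofReal ((if a.shape = b.shape then (1:ℝ)/2 else 1) *
              K q.1.mass q.2.mass *
              survFactor K μfam (q.1.mass + q.2.mass) s t)).map fun q =>
          HTree.node s q.1 q.2) := by
      intro s
      have hA2 : (Prod.instMeasurableSpace : MeasurableSpace (LHTree × LHTree))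
          = MeasurableSpace.comap (fun p : LHTree × LHTree => (p.1.forget, p.2.forget))
              inferInstance := comap_prod hLH
      have hFG2 : ∀ q : HTree × HTree,
          (fun p : LHTree × LHTree => (p.1.forget, p.2.forget))
            ((fun q : HTree × HTree => (label0 q.1, label0 q.2)) q) = q := by
        intro q; simp [forget_label0]
      have mFF : Measurable (fun p : LHTree × LHTree => (p.1.forget, p.2.forget)) :=
        meas_F hA2
      have hprod : ((limitHistL K μfam μ0 a s).prod (limitHistL K μfam μ0 b s)).map
            (fun p : LHTree × LHTree => (p.1.forget, p.2.forget))
          = (limitHist K μfam μ0 a.shape s).prod (limitHist K μfam μ0 b.shape s) := by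
        have h1 : limitHistL K μfam μ0 a s = (limitHist K μfam μ0 a.shape s).map label0 := by
          rw [← iha s]
          exact (map_G_map_F hLH forget_label0 _).symm
        have h2 : limitHistL K μfam μ0 b s = (limitHist K μfam μ0 b.shape s).map label0 := by
          rw [← ihb s]
          exact (map_G_map_F hLH forget_label0 _).symm
        rw [h1, h2, prod_map_G hLH forget_label0]
        exact map_F_map_G hA2 hFG2 _
      refine Measure.ext fun C hC => ?_
      have hB : MeasurableSet ((fun q : HTree × HTree => HTree.node s q.1 q.2) ⁻¹' C) :=
        measurable_htnode s hC
      rw [Measure.map_apply measurable_forget hC,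
        Measure.map_apply (measurable_nodeL s) (measurable_forget hC),
        Measure.map_apply (measurable_htnode s) hC,
        withDensity_apply _ hB]
      have hsetL : ((fun p : LHTree × LHTree => LHTree.node s p.1 p.2) ⁻¹'
            (LHTree.forget ⁻¹' C))
          = (fun p : LHTree × LHTree => (p.1.forget, p.2.forget)) ⁻¹'
              ((fun q : HTree × HTree => HTree.node s q.1 q.2) ⁻¹' C) := rfl
      rw [hsetL, withDensity_apply _ (mFF hB)]
      rw [← lintegral_indicator (mFF hB), ← lintegral_indicator hB]
      have hind : (((fun p : LHTree × LHTree => (p.1.forget, p.2.forget)) ⁻¹'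
            ((fun q : HTree × HTree => HTree.node s q.1 q.2) ⁻¹' C)).indicator
            fun p : LHTree × LHTree =>
            ENNReal.ofReal ((if a.shape = b.shape then (1:ℝ)/2 else 1) *
              K p.1.forget.mass p.2.forget.mass *
              survFactor K μfam (p.1.forget.mass + p.2.forget.mass) s t))
          = fun p : LHTree × LHTree =>
            ((((fun q : HTree × HTree => HTree.node s q.1 q.2) ⁻¹' C).indicator
              fun q : HTree × HTree =>
              ENNReal.ofReal ((if a.shape = b.shape then (1:ℝ)/2 else 1) *
                K q.1.mass q.2.mass *
                survFactor K μfam (q.1.mass + q.2.mass) s t))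
              ((fun p : LHTree × LHTree => (p.1.forget, p.2.forget)) p)) := by
        funext p
        rfl
      rw [hind, lintegral_comp_F hA2 hFG2, hprod]
    have hstep : ∀ s : ℝ,
        ((((limitHistL K μfam μ0 a s).prod (limitHistL K μfam μ0 b s)).withDensity fun p =>
            ENNReal.ofReal ((if a.shape = b.shape then (1:ℝ)/2 else 1) *
              K p.1.forget.mass p.2.forget.mass *
              survFactor K μfam (p.1.forget.mass + p.2.forget.mass) s t)).map fun p =>
          LHTree.node s p.1 p.2)
        = (((((limitHist K μfam μ0 a.shape s).prod (limitHist K μfam μ0 b.shape s)).withDensity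
            fun q => ENNReal.ofReal ((if a.shape = b.shape then (1:ℝ)/2 else 1) *
              K q.1.mass q.2.mass *
              survFactor K μfam (q.1.mass + q.2.mass) s t)).map fun q =>
          HTree.node s q.1 q.2).map label0) := by
      intro s
      rw [← perS s, map_G_map_F hLH forget_label0]
    simp only [limitHistL, LTree.shape, limitHist]
    rw [show (fun s => ((((limitHistL K μfam μ0 a s).prod (limitHistL K μfam μ0 b s)).withDensity
            fun p => ENNReal.ofReal ((if a.shape = b.shape then (1:ℝ)/2 else 1) *
              K p.1.forget.mass p.2.forget.mass *
              survFactor K μfam (p.1.forget.mass + p.2.forget.mass) s t)).map fun p =>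
          LHTree.node s p.1 p.2))
        = fun s => (((((limitHist K μfam μ0 a.shape s).prod
            (limitHist K μfam μ0 b.shape s)).withDensity
            fun q => ENNReal.ofReal ((if a.shape = b.shape then (1:ℝ)/2 else 1) *
              K q.1.mass q.2.mass *
              survFactor K μfam (q.1.mass + q.2.mass) s t)).map fun q =>
          HTree.node s q.1 q.2).map label0) from funext hstep]
    exact bind_map_G hLH forget_label0 _ _

end S16

/-- (Theorem 5.1(b) of the paper.)  Let `i` be a labeled binary
tree with `n` distinct leaves and type `τ = τ(i)`, and let `f` be a bounded
continuous function on `A_τ(0,t)`.  With `g_i : A_i(0,t) → A_τ(0,t)` the map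
forgetting the leaf labels and `f_i = f ∘ g_i`,
`∫_{A_τ(0,t)} f dμ̃_t = ∫_{A_i(0,t)} f_i dμ̃'_t`. -/
theorem statement16 (K : ℝ → ℝ → ℝ) (phi : ℝ → ℝ) (T : ℝ) (μ0 : Measure ℝ)
    (μfam : ℝ → Measure ℝ)
    (hKpos : ∀ x, 0 < x → ∀ z, 0 < z → 0 < K x z)
    (hKsymm : ∀ x z, K x z = K z x)
    (hKcont : ContinuousOn (fun p : ℝ × ℝ => K p.1 p.2) (Set.Ioi 0 ×ˢ Set.Ioi 0))
    (hμ0supp : μ0 (Set.Iic 0) = 0)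
    (hμfam0 : μfam 0 = μ0)
    (hsmol : IsSmoluchowskiSolution K phi T μfam)
    (t : ℝ) (ht0 : 0 ≤ t) (htT : t < T)
    (n : ℕ) (hn : 1 ≤ n) (i : LTree) (hidis : i.distinct) (hin : i.nLeaves = n)
    (τ : TreeShape) (hτ : i.shape = τ)
    (f : HTree → ℝ) (hfb : ∃ C, ∀ ξ, |f ξ| ≤ C)
    (hfc : ContinuousOn f (Aset τ t)) :
    ∫ ξ in Aset τ t, f ξ ∂(limitHist K μfam μ0 τ t)
      = ∫ ζ in {ζ : LHTree | ζ.lab = i ∧ ζ.forget.memA t}, f ζ.forget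
          ∂(limitHistL K μfam μ0 i t) := by
  subst hτ
  have hmap : (limitHistL K μfam μ0 i t).map LHTree.forget = limitHist K μfam μ0 i.shape t :=
    S16.mainlem K μfam μ0 i t
  have hAmeas : MeasurableSet (Aset i.shape t) := S16.measurableSet_Aset i.shape t
  set ν := limitHistL K μfam μ0 i t with hν
  set μ := limitHist K μfam μ0 i.shape t with hμ
  set S : Set LHTree := {ζ : LHTree | ζ.lab = i ∧ ζ.forget.memA t} with hSdef
  have key : (ν.restrict S).map LHTree.forget = μ.restrict (Aset i.shape t) := by
    refine Measure.ext fun B hB => ?_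
    rw [Measure.map_apply S16.measurable_forget hB,
      Measure.restrict_apply (S16.measurable_forget hB), Measure.restrict_apply hB]
    refine le_antisymm ?_ ?_
    · have hsub : LHTree.forget ⁻¹' B ∩ S ⊆ LHTree.forget ⁻¹' (B ∩ Aset i.shape t) := by
        rintro ζ ⟨hζB, hζlab, hζmem⟩
        refine ⟨hζB, ?_, hζmem⟩
        rw [S16.shape_forget_lab ζ, hζlab]
      refine le_trans (measure_mono hsub) (le_of_eq ?_)
      rw [← Measure.map_apply S16.measurable_forget (hB.inter hAmeas), hmap]
    · conv_rhs => rw [measure_eq_iInf]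
      refine le_iInf fun Z => le_iInf fun hZ => le_iInf fun hZm => ?_
      obtain ⟨B', hB', rfl⟩ := hZm
      have hsub : B ∩ Aset i.shape t ⊆ B' := by
        rintro ξ ⟨hξB, hξsh, hξmem⟩
        have h1 : (S16.labAlong i ξ) ∈ LHTree.forget ⁻¹' B ∩ S := by
          refine ⟨?_, ?_, ?_⟩
          · show (S16.labAlong i ξ).forget ∈ B
            rw [S16.forget_labAlong]; exact hξB
          · exact S16.lab_labAlong i ξ hξsh
          · rw [S16.forget_labAlong]; exact hξmem
        have h2 := hZ h1
        rwa [Set.mem_preimage, S16.forget_labAlong] at h2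
      calc μ (B ∩ Aset i.shape t) ≤ μ B' := measure_mono hsub
        _ = ν (LHTree.forget ⁻¹' B') := by
            rw [← hmap, Measure.map_apply S16.measurable_forget hB']
  have hf_meas : AEStronglyMeasurable f ((ν.restrict S).map LHTree.forget) := by
    rw [key]
    exact (hfc.aemeasurable hAmeas).aestronglyMeasurable
  calc ∫ ξ in Aset i.shape t, f ξ ∂μ
      = ∫ ξ, f ξ ∂((ν.restrict S).map LHTree.forget) := by rw [key]
    _ = ∫ ζ, f ζ.forget ∂(ν.restrict S) :=
        integral_map S16.measurable_forget.aemeasurable hf_meas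
    _ = ∫ ζ in S, f ζ.forget ∂ν := rfl


end
end

section
/- Tightness of the historical empirical measures: for every t<T and every ε>0 there exists n₀>0 such that, for all N, ℙ( μ̃_t^N({ξ ∈ A(0,t) : the number of leaves of ξ is at least n₀}) > ε ) < ε. -/
open MeasureTheory ProbabilityTheory Filter
open scoped ENNReal Classical

noncomputable section

instance : BorelSpace HTree := ⟨rfl⟩

lemma encode_length : ∀ ξ : HTree, (HTree.encode ξ).length + 2 = 4 * ξ.nLeaves
  | .leaf m => rfl
  | .node s l r => by
    have hl := encode_length l
    have hr := encode_length r
    simp only [HTree.encode, HTree.nLeaves, List.length_cons, List.length_append]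
    omega

lemma measurableSet_nLeaves_ge (n : ℕ) : MeasurableSet {ξ : HTree | n ≤ ξ.nLeaves} := by
  have hcont : Continuous fun ξ : HTree => (HTree.encode ξ).length :=
    (continuous_iff_continuousAt.2 List.continuousAt_length).comp continuous_induced_dom
  have heq : {ξ : HTree | n ≤ ξ.nLeaves}
      = (fun ξ : HTree => (HTree.encode ξ).length) ⁻¹' {m | 4 * n ≤ m + 2} := by
    ext ξ
    simp only [Set.mem_setOf_eq, Set.mem_preimage]
    have := encode_length ξ
    omega
  rw [heq]
  exact hcont.measurable trivial

lemma nLeaves_histTree (S : LTree → ℝ) (y : ℕ → ℝ) :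
    ∀ i : LTree, (histTree S y i).nLeaves = i.nLeaves
  | .leaf k => rfl
  | .node l r => by
    simp only [histTree, HTree.nLeaves, LTree.nLeaves,
      nLeaves_histTree S y l, nLeaves_histTree S y r]

lemma sum_nLeaves_stepMerge (S : LTree → ℝ) (I : Finset LTree) :
    ∑ i ∈ stepMerge S I, i.nLeaves ≤ ∑ i ∈ I, i.nLeaves := by
  unfold stepMerge
  split_ifs with h
  · obtain ⟨h1, h2, h3, -⟩ := Classical.choose_spec h
    set p := Classical.choose h with hp
    have hmem : p.2 ∈ I.erase p.1 := Finset.mem_erase.2 ⟨Ne.symm h3, h2⟩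
    have e1 : ∑ i ∈ (I.erase p.1).erase p.2, i.nLeaves + p.2.nLeaves
        = ∑ i ∈ I.erase p.1, i.nLeaves := Finset.sum_erase_add _ _ hmem
    have e2 : ∑ i ∈ I.erase p.1, i.nLeaves + p.1.nLeaves
        = ∑ i ∈ I, i.nLeaves := Finset.sum_erase_add _ _ h1
    have hub : ∑ i ∈ insert (LTree.node p.1 p.2) ((I.erase p.1).erase p.2), i.nLeaves
        ≤ (LTree.node p.1 p.2).nLeaves + ∑ i ∈ (I.erase p.1).erase p.2, i.nLeaves := by
      by_cases hmem2 : LTree.node p.1 p.2 ∈ (I.erase p.1).erase p.2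
      · rw [Finset.insert_eq_self.2 hmem2]; exact Nat.le_add_left _ _
      · rw [Finset.sum_insert hmem2]
    have hnode : (LTree.node p.1 p.2).nLeaves = p.1.nLeaves + p.2.nLeaves := rfl
    omega
  · exact le_rfl

lemma sum_nLeaves_evolve (S : LTree → ℝ) (J : Finset ℕ) (n : ℕ) :
    ∑ i ∈ evolve S J n, i.nLeaves ≤ J.card := by
  induction n with
  | zero =>
    have : ∑ i ∈ J.image LTree.leaf, i.nLeaves = ∑ _i ∈ J.image LTree.leaf, 1 := by
      refine Finset.sum_congr rfl fun i hi => ?_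
      obtain ⟨k, -, rfl⟩ := Finset.mem_image.1 hi
      rfl
    simpa [evolve, this] using Finset.card_image_le (f := LTree.leaf) (s := J)
  | succ n ih => exact le_trans (sum_nLeaves_stepMerge _ _) ih

lemma histEmp_le (y : ℕ → ℝ) (N : ℕ) (S : LTree → ℝ) (t : ℝ) (n₀ : ℕ) (hn₀ : 0 < n₀) :
    histEmp y N S t {ξ : HTree | n₀ ≤ ξ.nLeaves} ≤ ((n₀ : ℝ≥0∞))⁻¹ := by
  classical
  set s : Set HTree := {ξ : HTree | n₀ ≤ ξ.nLeaves} with hs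
  have hms : MeasurableSet s := measurableSet_nLeaves_ge n₀
  set P := presentTrees S (Finset.range N) t with hP
  have happ : histEmp y N S t s
      = ((N : ℝ≥0∞))⁻¹ * ((P.filter fun i => n₀ ≤ i.nLeaves).card : ℝ≥0∞) := by
    rw [histEmp, Measure.smul_apply, smul_eq_mul]
    congr 1
    rw [Measure.finset_sum_apply]
    have : ∀ i ∈ P, Measure.dirac (histTree S y i) s
        = if n₀ ≤ i.nLeaves then (1 : ℝ≥0∞) else 0 := by
      intro i _
      rw [Measure.dirac_apply' _ hms, Set.indicator_apply]
      simp [hs, Set.mem_setOf_eq, nLeaves_histTree]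
    rw [Finset.sum_congr rfl this, Finset.sum_boole]
  rw [happ]
  -- counting bound : n₀ * card ≤ N
  set c := (P.filter fun i => n₀ ≤ i.nLeaves).card with hc
  have hcount : n₀ * c ≤ N := by
    have h1 : c * n₀ ≤ ∑ i ∈ P.filter fun i => n₀ ≤ i.nLeaves, i.nLeaves := by
      simpa [smul_eq_mul] using
        Finset.card_nsmul_le_sum (P.filter fun i => n₀ ≤ i.nLeaves)
          (fun i => i.nLeaves) n₀ (fun x hx => (Finset.mem_filter.1 hx).2)
    have h2 : ∑ i ∈ P.filter fun i => n₀ ≤ i.nLeaves, i.nLeaves ≤ ∑ i ∈ P, i.nLeaves :=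
      Finset.sum_le_sum_of_subset (Finset.filter_subset _ _)
    have h3 : ∑ i ∈ P, i.nLeaves ≤ N := by
      simpa [hP, presentTrees] using sum_nLeaves_evolve S (Finset.range N) (numMerges S (Finset.range N) t)
    calc n₀ * c = c * n₀ := Nat.mul_comm _ _
      _ ≤ N := le_trans h1 (le_trans h2 h3)
  have hcast : (c : ℝ≥0∞) ≤ (N : ℝ≥0∞) * ((n₀ : ℝ≥0∞))⁻¹ := by
    have h1 : ((n₀ * c : ℕ) : ℝ≥0∞) ≤ (N : ℝ≥0∞) := Nat.cast_le.2 hcount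
    rw [Nat.cast_mul] at h1
    have hn0 : (n₀ : ℝ≥0∞) ≠ 0 := by exact_mod_cast hn₀.ne'
    have hntop : (n₀ : ℝ≥0∞) ≠ ⊤ := ENNReal.natCast_ne_top n₀
    calc (c : ℝ≥0∞) = ((n₀ : ℝ≥0∞) * c) * (n₀ : ℝ≥0∞)⁻¹ := by
          rw [mul_comm ((n₀ : ℝ≥0∞)) (c : ℝ≥0∞), mul_assoc,
            ENNReal.mul_inv_cancel hn0 hntop, mul_one]
      _ ≤ (N : ℝ≥0∞) * ((n₀ : ℝ≥0∞))⁻¹ := mul_le_mul_left h1 _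
  calc ((N : ℝ≥0∞))⁻¹ * (c : ℝ≥0∞)
      ≤ ((N : ℝ≥0∞))⁻¹ * ((N : ℝ≥0∞) * ((n₀ : ℝ≥0∞))⁻¹) := mul_le_mul_right hcast _
    _ = (((N : ℝ≥0∞))⁻¹ * (N : ℝ≥0∞)) * ((n₀ : ℝ≥0∞))⁻¹ := (mul_assoc _ _ _).symm
    _ ≤ 1 * ((n₀ : ℝ≥0∞))⁻¹ := by
        refine mul_le_mul_left ?_ _
        rcases Nat.eq_zero_or_pos N with hN | hN
        · simp [hN]
        · rw [ENNReal.inv_mul_cancel (by exact_mod_cast hN.ne') (ENNReal.natCast_ne_top N)]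
    _ = ((n₀ : ℝ≥0∞))⁻¹ := one_mul _

/-- (Tightness, subsection 4.1 of the paper.)  For every `t < T`
and every `ε > 0` there exists `n₀ > 0` such that, for all `N`,
`ℙ(μ̃_t^N({ξ ∈ A(0,t) : n(ξ) ≥ n₀}) > ε) < ε`, where `n(ξ)` is the number of
leaves (initial particles) of the historical tree ξ. -/
theorem statement17 (σ : Setting) (t : ℝ) (ht0 : 0 ≤ t) (htT : t < σ.T) :
    ∀ ε : ℝ, 0 < ε → ∃ n₀ : ℕ, 0 < n₀ ∧ ∀ N : ℕ,
      σ.P {ω | ENNReal.ofReal ε <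
          histEmp σ.y N (Sclock (N : ℝ) σ.K σ.y ω) t {ξ : HTree | n₀ ≤ ξ.nLeaves}}
        < ENNReal.ofReal ε := by
  intro ε hε
  set n₀ : ℕ := max 1 ⌈ε⁻¹⌉₊ with hn₀def
  have hn₀pos : 0 < n₀ := lt_of_lt_of_le one_pos (le_max_left _ _)
  refine ⟨n₀, hn₀pos, fun N => ?_⟩
  have hinv : ((n₀ : ℝ≥0∞))⁻¹ ≤ ENNReal.ofReal ε := by
    have h1 : ε⁻¹ ≤ (n₀ : ℝ) := le_trans (Nat.le_ceil _) (by exact_mod_cast le_max_right 1 ⌈ε⁻¹⌉₊)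
    have h2 : ((n₀ : ℝ))⁻¹ ≤ ε :=
      (inv_le_comm₀ (by exact_mod_cast hn₀pos) hε).mpr h1
    calc ((n₀ : ℝ≥0∞))⁻¹ = ENNReal.ofReal ((n₀ : ℝ))⁻¹ := by
          rw [ENNReal.ofReal_inv_of_pos (by exact_mod_cast hn₀pos), ENNReal.ofReal_natCast]
      _ ≤ ENNReal.ofReal ε := ENNReal.ofReal_le_ofReal h2
  have hempty : {ω : Omega | ENNReal.ofReal ε <
      histEmp σ.y N (Sclock (N : ℝ) σ.K σ.y ω) t {ξ : HTree | n₀ ≤ ξ.nLeaves}} = ∅ := by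
    ext ω
    simp only [Set.mem_setOf_eq, Set.mem_empty_iff_false, iff_false, not_lt]
    exact le_trans (histEmp_le σ.y N _ t n₀ hn₀pos) hinv
  rw [hempty, measure_empty]
  exact ENNReal.ofReal_pos.2 hε


end
end
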